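/- Let H be a Hilbert space, D self-adjoint on H, and Φ bounded self-adjoint with Φ² ≥ d > 0 (as quadratic forms) such that the commutator [D, Φ] extends to a bounded operator with Φ² ≥ d + ‖[D,Φ]‖ everywhere. Then for the operator B₊ = D + iΦ one has ‖B₊ u‖² = ‖Du‖² + ‖Φu‖² + ⟨i[D,Φ]u, u⟩ ≥ d‖u‖² for all u ∈ dom(D); in particular ker(D + iΦ) = 0 and similarly ker(D - iΦ) = 0. -/

import Mathlib

/-!
Expanding `‖Du + iΦu‖²` produces the cross term `-2 Im ⟪Du, Φu⟫`, and the symmetry of `D` and `Φ`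
identifies it with `Re ⟪i[D,Φ]u, u⟫`. That term is bounded in absolute value by `‖[D,Φ]‖ ‖u‖²`,
which the hypothesis `Φ² ≥ d + ‖[D,Φ]‖` absorbs into `‖Φu‖²`, leaving `d ‖u‖²`. The same
computation with the opposite sign handles `D - iΦ`.
-/

open Complex InnerProductSpace

section CommutatorIdentity

variable {E : Type*} [NormedAddCommGroup E] [InnerProductSpace ℂ E]

theorem norm_add_I_smul_sq (x y : E) :
    ‖x + I • y‖ ^ 2 = ‖x‖ ^ 2 + ‖y‖ ^ 2 - 2 * (⟪x, y⟫_ℂ).im := by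
  rw [@norm_add_sq ℂ, inner_smul_right, norm_smul, norm_I]
  simp only [RCLike.re_to_complex, mul_re, I_re, I_im]
  ring

theorem norm_sub_I_smul_sq (x y : E) :
    ‖x - I • y‖ ^ 2 = ‖x‖ ^ 2 + ‖y‖ ^ 2 + 2 * (⟪x, y⟫_ℂ).im := by
  rw [@norm_sub_sq ℂ, inner_smul_right, norm_smul, norm_I]
  simp only [RCLike.re_to_complex, mul_re, I_re, I_im]
  ring

theorem re_inner_I_smul_commutator {D Φ : E →ₗ[ℂ] E} (hD : D.IsSymmetric) (hΦ : Φ.IsSymmetric)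
    (u : E) : (⟪I • (D (Φ u) - Φ (D u)), u⟫_ℂ).re = -2 * (⟪D u, Φ u⟫_ℂ).im := by
  rw [inner_smul_left, inner_sub_left, hD (Φ u) u, hΦ (D u) u, ← inner_conj_symm (Φ u) (D u)]
  simp only [mul_re, conj_re, conj_im, sub_re, sub_im, I_re, I_im]
  ring

theorem norm_add_I_smul_sq_eq {D Φ : E →ₗ[ℂ] E} (hD : D.IsSymmetric) (hΦ : Φ.IsSymmetric)
    (u : E) : ‖D u + I • Φ u‖ ^ 2
      = ‖D u‖ ^ 2 + ‖Φ u‖ ^ 2 + (⟪I • (D (Φ u) - Φ (D u)), u⟫_ℂ).re := by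
  rw [norm_add_I_smul_sq, re_inner_I_smul_commutator hD hΦ]
  ring

theorem norm_sub_I_smul_sq_eq {D Φ : E →ₗ[ℂ] E} (hD : D.IsSymmetric) (hΦ : Φ.IsSymmetric)
    (u : E) : ‖D u - I • Φ u‖ ^ 2
      = ‖D u‖ ^ 2 + ‖Φ u‖ ^ 2 - (⟪I • (D (Φ u) - Φ (D u)), u⟫_ℂ).re := by
  rw [norm_sub_I_smul_sq, re_inner_I_smul_commutator hD hΦ]
  ring

end CommutatorIdentity

theorem ContinuousLinearMap.abs_re_inner_apply_self_le {𝕜 E : Type*} [RCLike 𝕜]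
    [NormedAddCommGroup E] [InnerProductSpace 𝕜 E] (T : E →L[𝕜] E) (x : E) :
    |RCLike.re ⟪T x, x⟫_𝕜| ≤ ‖T‖ * ‖x‖ ^ 2 :=
  calc |RCLike.re ⟪T x, x⟫_𝕜| ≤ ‖⟪T x, x⟫_𝕜‖ := RCLike.abs_re_le_norm _
    _ ≤ ‖T x‖ * ‖x‖ := norm_inner_le_norm _ _
    _ ≤ ‖T‖ * ‖x‖ * ‖x‖ := by gcongr; exact T.le_opNorm x
    _ = ‖T‖ * ‖x‖ ^ 2 := by ring

theorem eq_zero_of_mul_sq_norm_le_sq_norm_apply {α β : Type*} [NormedAddCommGroup α]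
    [NormedAddCommGroup β] {f : α → β} {d : ℝ} (hd : 0 < d) (hf : ∀ u, d * ‖u‖ ^ 2 ≤ ‖f u‖ ^ 2)
    {u : α} (hu : f u = 0) : u = 0 := by
  have h := hf u
  rw [hu, norm_zero, zero_pow two_ne_zero] at h
  have : ‖u‖ ^ 2 ≤ 0 := nonpos_of_mul_nonpos_right h hd
  simpa using this

theorem callias_kernel_vanishing_general
    {H : Type*} [NormedAddCommGroup H] [InnerProductSpace ℂ H] [CompleteSpace H]
    (D : H →ₗ[ℂ] H)
    (hDsym : ∀ x y : H, (inner ℂ (D x) y : ℂ) = inner ℂ x (D y))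
    (Φ : H →L[ℂ] H) (hΦ : IsSelfAdjoint Φ)
    -- K = i[D,Φ] extends to a bounded self-adjoint operator
    (K : H →L[ℂ] H) (hK : ∀ x, K x = Complex.I • (D (Φ x) - Φ (D x)))
    (d : ℝ) (hd : 0 < d)
    -- Φ² - ‖[D,Φ]‖·Id ≥ d·Id as quadratic forms
    (hform : ∀ x : H, (d + ‖K‖) * ‖x‖ ^ 2 ≤ (inner ℂ (Φ (Φ x)) x : ℂ).re) :
    (∀ u : H,
      ‖D u + Complex.I • (Φ u)‖ ^ 2 = ‖D u‖ ^ 2 + ‖Φ u‖ ^ 2 + (inner ℂ (K u) u : ℂ).re) ∧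
    (∀ u : H, d * ‖u‖ ^ 2 ≤ ‖D u + Complex.I • (Φ u)‖ ^ 2) ∧
    (∀ u : H, D u + Complex.I • (Φ u) = 0 → u = 0) ∧
    (∀ u : H, D u - Complex.I • (Φ u) = 0 → u = 0) := by
  have hΦsym := ContinuousLinearMap.isSelfAdjoint_iff_isSymmetric.mp hΦ
  have hplus (u : H) : ‖D u + I • Φ u‖ ^ 2 = ‖D u‖ ^ 2 + ‖Φ u‖ ^ 2 + (⟪K u, u⟫_ℂ).re := by
    rw [hK]
    exact norm_add_I_smul_sq_eq hDsym hΦsym u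
  have hminus (u : H) : ‖D u - I • Φ u‖ ^ 2 = ‖D u‖ ^ 2 + ‖Φ u‖ ^ 2 - (⟪K u, u⟫_ℂ).re := by
    rw [hK]
    exact norm_sub_I_smul_sq_eq hDsym hΦsym u
  have hbound (u : H) : d * ‖u‖ ^ 2 + |(⟪K u, u⟫_ℂ).re| ≤ ‖D u‖ ^ 2 + ‖Φ u‖ ^ 2 := by
    have hΦu : (d + ‖K‖) * ‖u‖ ^ 2 ≤ ‖Φ u‖ ^ 2 := by
      calc _ ≤ (⟪Φ (Φ u), u⟫_ℂ).re := hform u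
        _ = ‖Φ u‖ ^ 2 := by
          rw [← inner_self_eq_norm_sq (𝕜 := ℂ)]
          exact congrArg re (hΦsym (Φ u) u)
    have hKu : |(⟪K u, u⟫_ℂ).re| ≤ ‖K‖ * ‖u‖ ^ 2 := K.abs_re_inner_apply_self_le u
    linarith [sq_nonneg ‖D u‖]
  have hpos (u : H) : d * ‖u‖ ^ 2 ≤ ‖D u + I • Φ u‖ ^ 2 := by
    linarith [hplus u, hbound u, neg_abs_le (⟪K u, u⟫_ℂ).re]
  have hneg (u : H) : d * ‖u‖ ^ 2 ≤ ‖D u - I • Φ u‖ ^ 2 := by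
    linarith [hminus u, hbound u, le_abs_self (⟪K u, u⟫_ℂ).re]
  exact ⟨hplus, hpos, fun u => eq_zero_of_mul_sq_norm_le_sq_norm_apply hd hpos,
    fun u => eq_zero_of_mul_sq_norm_le_sq_norm_apply hd hneg⟩

/-- If `Φ² ≥ d + ‖[D,Φ]‖` then `‖(D + iΦ)u‖² = ‖Du‖² + ‖Φu‖² + ⟨i[D,Φ]u,u⟩ ≥ d‖u‖²`;
in particular `ker (D + iΦ) = 0` and `ker (D - iΦ) = 0`. -/
theorem callias_kernel_vanishing
    {H : Type*} [NormedAddCommGroup H] [InnerProductSpace ℂ H] [CompleteSpace H]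
    (D : H →ₗ[ℂ] H)
    (hDsym : ∀ x y : H, (inner ℂ (D x) y : ℂ) = inner ℂ x (D y))
    (Φ : H →L[ℂ] H) (hΦ : IsSelfAdjoint Φ)
    -- K = i[D,Φ] extends to a bounded self-adjoint operator
    (K : H →L[ℂ] H) (hK : ∀ x, K x = Complex.I • (D (Φ x) - Φ (D x)))
    (hKsa : IsSelfAdjoint K)
    (d : ℝ) (hd : 0 < d)
    -- Φ² - ‖[D,Φ]‖·Id ≥ d·Id as quadratic forms
    (hform : ∀ x : H, (d + ‖K‖) * ‖x‖ ^ 2 ≤ (inner ℂ (Φ (Φ x)) x : ℂ).re) :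
    (∀ u : H,
      ‖D u + Complex.I • (Φ u)‖ ^ 2 = ‖D u‖ ^ 2 + ‖Φ u‖ ^ 2 + (inner ℂ (K u) u : ℂ).re) ∧
    (∀ u : H, d * ‖u‖ ^ 2 ≤ ‖D u + Complex.I • (Φ u)‖ ^ 2) ∧
    (∀ u : H, D u + Complex.I • (Φ u) = 0 → u = 0) ∧
    (∀ u : H, D u - Complex.I • (Φ u) = 0 → u = 0) :=
  callias_kernel_vanishing_general D hDsym Φ hΦ K hK d hd hform
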